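/- Let A be strictly positive and let T1, T2 be bounded linear operators on H each admitting an A-adjoint (i.e. for each i there exists S_i with A∘S_i = T_i*∘A). Then w_B([[0,T1],[T2,0]]) + (‖T1‖_A + ‖T2‖_A)/2 + (1/2)·|w_A(T1+T2) - (‖T1‖_A + ‖T2‖_A)/2| + (1/2)·|w_A(T1-T2) - (‖T1‖_A + ‖T2‖_A)/2| ≤ 2·(w_A(T1) + w_A(T2)). -/

import Mathlib

open scoped InnerProductSpace
open ContinuousLinearMap

variable {H : Type*} [NormedAddCommGroup H] [InnerProductSpace ℂ H] [CompleteSpace H]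

/-- The `A`-seminorm `‖x‖_A = √⟨Ax,x⟩`. -/
noncomputable def aNorm (A : H →L[ℂ] H) (x : H) : ℝ :=
  Real.sqrt (⟪A x, x⟫_ℂ).re

/-- The `A`-numerical radius `w_A(T) = sup {|⟨ATx,x⟩| : x ∈ H, ‖x‖_A = 1}`. -/
noncomputable def wA (A T : H →L[ℂ] H) : ℝ :=
  sSup {r : ℝ | ∃ x : H, aNorm A x = 1 ∧ r = ‖⟪A (T x), x⟫_ℂ‖}

/-- The `A`-operator seminorm `‖T‖_A = sup {‖Tx‖_A : x ∈ closure (range A), ‖x‖_A = 1}`. -/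
noncomputable def aOpNorm (A T : H →L[ℂ] H) : ℝ :=
  sSup {r : ℝ | ∃ x : H, x ∈ closure (Set.range (⇑A)) ∧ aNorm A x = 1 ∧ r = aNorm A (T x)}

/-- The `B`-numerical radius of the operator matrix `[[T1,T2],[T3,T4]]` acting on `H ⊕ H` by
`(x, y) ↦ (T1 x + T2 y, T3 x + T4 y)`, where `B = [[A,0],[0,A]]`:
`w_B(T) = sup {|⟨BTz,z⟩| : z ∈ H ⊕ H, ‖z‖_B = 1}`. -/
noncomputable def wB (A T1 T2 T3 T4 : H →L[ℂ] H) : ℝ :=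
  sSup {r : ℝ | ∃ x y : H, Real.sqrt ((⟪A x, x⟫_ℂ).re + (⟪A y, y⟫_ℂ).re) = 1 ∧
    r = ‖⟪A (T1 x + T2 y), x⟫_ℂ + ⟪A (T3 x + T4 y), y⟫_ℂ‖}

/-!
If `A S = T* A`, then `R = S T` is `A`-symmetric, so `n ↦ ‖Rⁿ x‖_A` is log-convex by
Cauchy–Schwarz; being also dominated by `√‖A‖ ‖x‖ ‖R‖ⁿ`, it gives `‖R x‖_A ≤ ‖R‖ ‖x‖_A`, hence
`‖T x‖_A² = ⟨R x, x⟩_A ≤ ‖R‖ ‖x‖_A²`. So the suprema defining `w_A(T₁)`, `w_A(T₂)` and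
`w_A(T₁ ± T₂)` are genuine, not the junk value of an unbounded `sSup`.

The polarization identity `2 (⟨T y, x⟩_A + ⟨T x, y⟩_A) = ⟨T (x+y), x+y⟩_A - ⟨T (x-y), x-y⟩_A`
and the parallelogram law bound `‖⟨T y, x⟩_A + ⟨T x, y⟩_A‖` by `w_A(T) (‖x‖_A² + ‖y‖_A²)`. Splitting
`T₁ = (P + Q)/2`, `T₂ = (P - Q)/2` with `P = T₁ + T₂`, `Q = T₁ - T₂` yields
`w_B ≤ (w_A(P) + w_A(Q))/2`, and `y = T x / ‖T x‖_A` yields `‖T‖_A ≤ 2 w_A(T)`. With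
`N = (‖T₁‖_A + ‖T₂‖_A)/2`, the left-hand side of the inequality is then at most
`max (w_A(P)) N + max (w_A(Q)) N`, and each of `w_A(P)`, `w_A(Q)`, `N` is at most
`w_A(T₁) + w_A(T₂)`.
-/

open Filter Topology

lemma le_mul_of_sq_le_mul_of_le_geom {a : ℕ → ℝ} {q M : ℝ} (ha₀ : 0 ≤ a 0) (hq : 0 ≤ q)
    (hconv : ∀ n, a (n + 1) ^ 2 ≤ a n * a (n + 2)) (hgeom : ∀ n, a n ≤ M * q ^ n) :
    a 1 ≤ q * a 0 := by
  by_contra! h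
  have h₀ : 0 < a 0 := by
    refine ha₀.lt_of_ne fun h₀ => ?_
    have := hconv 0
    rw [← h₀, zero_mul] at this
    rw [← h₀, mul_zero] at h
    nlinarith
  set r := a 1 / a 0
  -- log-convexity: the ratios `a (n + 1) / a n` never drop below `r > q`
  have hqr : q < r := by rwa [lt_div_iff₀ h₀]
  have hr : 0 < r := hq.trans_lt hqr
  have hratio : ∀ n, 0 < a n ∧ r * a n ≤ a (n + 1) := by
    intro n
    induction n with
    | zero => exact ⟨h₀, (div_mul_cancel₀ _ h₀.ne').le⟩
    | succ n ih =>
      have hpos : 0 < a (n + 1) := (mul_pos hr ih.1).trans_le ih.2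
      refine ⟨hpos, le_of_mul_le_mul_left ?_ ih.1⟩
      nlinarith [hconv n, ih.2]
  have hlower : ∀ n, a 0 * r ^ n ≤ a n := by
    intro n
    induction n with
    | zero => simp
    | succ n ih =>
      calc a 0 * r ^ (n + 1) = r * (a 0 * r ^ n) := by ring
        _ ≤ r * a n := by gcongr
        _ ≤ a (n + 1) := (hratio n).2
  have hlim : Tendsto (fun n : ℕ => M * (q / r) ^ n) atTop (𝓝 0) := by
    simpa using (tendsto_pow_atTop_nhds_zero_of_lt_one (div_nonneg hq hr.le)
      ((div_lt_one hr).2 hqr)).const_mul M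
  have : a 0 ≤ 0 := ge_of_tendsto' hlim fun n => by
    rw [div_pow, ← mul_div_assoc, le_div_iff₀ (pow_pos hr n)]
    exact (hlower n).trans (hgeom n)
  linarith

section

variable {E : Type*} [NormedAddCommGroup E] [InnerProductSpace ℂ E] {A : E →L[ℂ] E}

lemma conj_inner_map_symm (hA : A.IsPositive) (u v : E) :
    starRingEnd ℂ ⟪A v, u⟫_ℂ = ⟪A u, v⟫_ℂ := by
  rw [hA.inner_left_eq_inner_right, inner_conj_symm]

/-- The semi-inner product `⟨x, y⟩_A`, to reuse Mathlib's Cauchy–Schwarz inequality. -/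
noncomputable abbrev aPreInnerCore (hA : A.IsPositive) : PreInnerProductSpace.Core ℂ E where
  inner x y := ⟪A x, y⟫_ℂ
  conj_inner_symm := conj_inner_map_symm hA
  re_inner_nonneg x := hA.re_inner_nonneg_left x
  add_left x y z := by simp only [map_add, inner_add_left]
  smul_left x y r := by simp only [map_smul, inner_smul_left]

lemma norm_inner_le_aNorm_mul_aNorm (hA : A.IsPositive) (u v : E) :
    ‖⟪A u, v⟫_ℂ‖ ≤ aNorm A u * aNorm A v :=
  @InnerProductSpace.Core.norm_inner_le_norm ℂ E _ _ _ (aPreInnerCore hA) u v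

lemma aNorm_nonneg (x : E) : 0 ≤ aNorm A x := Real.sqrt_nonneg _

lemma aNorm_sq (hA : A.IsPositive) (x : E) : aNorm A x ^ 2 = (⟪A x, x⟫_ℂ).re :=
  Real.sq_sqrt (hA.re_inner_nonneg_left x)

lemma norm_inner_self_eq_aNorm_sq (hA : A.IsPositive) (x : E) :
    ‖⟪A x, x⟫_ℂ‖ = aNorm A x ^ 2 := by
  rw [aNorm_sq hA, Complex.re_eq_norm.2 (hA.inner_nonneg_left x)]

lemma aNorm_le_sqrt_norm_mul_norm (x : E) : aNorm A x ≤ √‖A‖ * ‖x‖ := by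
  rw [← Real.sqrt_sq (norm_nonneg x), ← Real.sqrt_mul (norm_nonneg A)]
  refine Real.sqrt_le_sqrt ?_
  calc (⟪A x, x⟫_ℂ).re ≤ ‖A x‖ * ‖x‖ := (Complex.re_le_norm _).trans (norm_inner_le_norm _ _)
    _ ≤ ‖A‖ * ‖x‖ ^ 2 := by rw [sq, ← mul_assoc]; gcongr; exact A.le_opNorm x

lemma inner_map_smul_smul (B : E →L[ℂ] E) (c : ℂ) (x : E) :
    ⟪B (c • x), c • x⟫_ℂ = (‖c‖ ^ 2 : ℂ) * ⟪B x, x⟫_ℂ := by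
  rw [map_smul, inner_smul_left, inner_smul_right, ← mul_assoc, Complex.conj_mul']

lemma aNorm_smul (c : ℂ) (x : E) : aNorm A (c • x) = ‖c‖ * aNorm A x := by
  rw [aNorm, aNorm, inner_map_smul_smul, ← Complex.ofReal_pow, Complex.re_ofReal_mul,
    Real.sqrt_mul (sq_nonneg _), Real.sqrt_sq (norm_nonneg c)]

lemma re_inner_add_add_add_re_inner_sub_sub (x y : E) :
    (⟪A (x + y), x + y⟫_ℂ).re + (⟪A (x - y), x - y⟫_ℂ).re =
      2 * (⟪A x, x⟫_ℂ).re + 2 * (⟪A y, y⟫_ℂ).re := by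
  have h : ⟪A (x + y), x + y⟫_ℂ + ⟪A (x - y), x - y⟫_ℂ = 2 * ⟪A x, x⟫_ℂ + 2 * ⟪A y, y⟫_ℂ := by
    simp only [map_add, map_sub, inner_add_left, inner_add_right, inner_sub_left, inner_sub_right]
    ring
  simpa using congrArg Complex.re h

lemma norm_pow_apply_le (R : E →L[ℂ] E) (x : E) (n : ℕ) : ‖(R ^ n) x‖ ≤ ‖R‖ ^ n * ‖x‖ := by
  induction n with
  | zero => simp
  | succ n ih =>
    calc ‖(R ^ (n + 1)) x‖ = ‖R ((R ^ n) x)‖ := by rw [pow_succ']; rfl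
      _ ≤ ‖R‖ * (‖R‖ ^ n * ‖x‖) := (R.le_opNorm _).trans (by gcongr)
      _ = ‖R‖ ^ (n + 1) * ‖x‖ := by ring

lemma aNorm_apply_le_opNorm_mul (hA : A.IsPositive) {R : E →L[ℂ] E}
    (hR : ∀ u v, ⟪A (R u), v⟫_ℂ = ⟪A u, R v⟫_ℂ) (x : E) :
    aNorm A (R x) ≤ ‖R‖ * aNorm A x := by
  have hpow : ∀ n, (R ^ (n + 1)) x = R ((R ^ n) x) := fun n => by
    rw [pow_succ']; rfl
  have hconv : ∀ n, aNorm A ((R ^ (n + 1)) x) ^ 2 ≤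
      aNorm A ((R ^ n) x) * aNorm A ((R ^ (n + 2)) x) := fun n =>
    calc aNorm A ((R ^ (n + 1)) x) ^ 2 = (⟪A ((R ^ n) x), (R ^ (n + 2)) x⟫_ℂ).re := by
          rw [aNorm_sq hA, hpow, hR, hpow (n + 1), hpow]
      _ ≤ _ := (Complex.re_le_norm _).trans (norm_inner_le_aNorm_mul_aNorm hA _ _)
  have hgeom : ∀ n, aNorm A ((R ^ n) x) ≤ √‖A‖ * ‖x‖ * ‖R‖ ^ n := fun n =>
    calc aNorm A ((R ^ n) x) ≤ √‖A‖ * (‖R‖ ^ n * ‖x‖) :=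
          (aNorm_le_sqrt_norm_mul_norm _).trans (by gcongr; exact norm_pow_apply_le R x n)
      _ = √‖A‖ * ‖x‖ * ‖R‖ ^ n := by ring
  simpa using le_mul_of_sq_le_mul_of_le_geom (a := fun n => aNorm A ((R ^ n) x))
    (aNorm_nonneg _) (norm_nonneg R) hconv hgeom

lemma aNorm_apply_le_of_comp_eq_adjoint_comp [CompleteSpace E] (hA : A.IsPositive)
    {S T : E →L[ℂ] E} (hS : A ∘L S = adjoint T ∘L A) (x : E) :
    aNorm A (T x) ≤ √‖S ∘L T‖ * aNorm A x := by
  have hSadj : ∀ w v, ⟪A (S w), v⟫_ℂ = ⟪A w, T v⟫_ℂ := fun w v => by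
    rw [← comp_apply A S, hS, comp_apply, adjoint_inner_left]
  have hR : ∀ u v, ⟪A ((S ∘L T) u), v⟫_ℂ = ⟪A u, (S ∘L T) v⟫_ℂ := fun u v => by
    rw [comp_apply, comp_apply, hSadj, ← conj_inner_map_symm hA u, hSadj, conj_inner_map_symm hA]
  have hsq : aNorm A (T x) ^ 2 ≤ ‖S ∘L T‖ * aNorm A x ^ 2 :=
    calc aNorm A (T x) ^ 2 = (⟪A ((S ∘L T) x), x⟫_ℂ).re := by
          rw [aNorm_sq hA, comp_apply, hSadj]
      _ ≤ aNorm A ((S ∘L T) x) * aNorm A x :=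
          (Complex.re_le_norm _).trans (norm_inner_le_aNorm_mul_aNorm hA _ _)
      _ ≤ ‖S ∘L T‖ * aNorm A x * aNorm A x := by
          gcongr
          · exact aNorm_nonneg x
          · exact aNorm_apply_le_opNorm_mul hA hR x
      _ = ‖S ∘L T‖ * aNorm A x ^ 2 := by ring
  rw [← Real.sqrt_sq (aNorm_nonneg (T x)), ← Real.sqrt_sq (aNorm_nonneg x),
    ← Real.sqrt_mul (norm_nonneg _)]
  exact Real.sqrt_le_sqrt hsq

/-- Boundedness of the `A`-numerical range, which makes `wA A T` a genuine supremum. -/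
def IsAFormBounded (A T : E →L[ℂ] E) : Prop :=
  ∃ C : ℝ, ∀ x, ‖⟪A (T x), x⟫_ℂ‖ ≤ C * (⟪A x, x⟫_ℂ).re

lemma IsAFormBounded.of_aNorm_apply_le (hA : A.IsPositive) {T : E →L[ℂ] E} {C : ℝ}
    (hT : ∀ x, aNorm A (T x) ≤ C * aNorm A x) : IsAFormBounded A T :=
  ⟨C, fun x => calc
    ‖⟪A (T x), x⟫_ℂ‖ ≤ aNorm A (T x) * aNorm A x := norm_inner_le_aNorm_mul_aNorm hA _ _
    _ ≤ C * aNorm A x * aNorm A x := by gcongr; exacts [aNorm_nonneg x, hT x]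
    _ = C * (⟪A x, x⟫_ℂ).re := by rw [mul_assoc, ← sq, aNorm_sq hA]⟩

lemma norm_inner_add_apply_le (T₁ T₂ : E →L[ℂ] E) (x : E) :
    ‖⟪A ((T₁ + T₂) x), x⟫_ℂ‖ ≤ ‖⟪A (T₁ x), x⟫_ℂ‖ + ‖⟪A (T₂ x), x⟫_ℂ‖ := by
  rw [add_apply, map_add, inner_add_left]
  exact norm_add_le _ _

lemma norm_inner_sub_apply_le (T₁ T₂ : E →L[ℂ] E) (x : E) :
    ‖⟪A ((T₁ - T₂) x), x⟫_ℂ‖ ≤ ‖⟪A (T₁ x), x⟫_ℂ‖ + ‖⟪A (T₂ x), x⟫_ℂ‖ := by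
  rw [sub_apply, map_sub, inner_sub_left]
  exact norm_sub_le _ _

lemma IsAFormBounded.add {T₁ T₂ : E →L[ℂ] E} (h₁ : IsAFormBounded A T₁)
    (h₂ : IsAFormBounded A T₂) : IsAFormBounded A (T₁ + T₂) := by
  obtain ⟨C₁, hC₁⟩ := h₁
  obtain ⟨C₂, hC₂⟩ := h₂
  exact ⟨C₁ + C₂, fun x => (norm_inner_add_apply_le T₁ T₂ x).trans
    (by rw [add_mul]; exact add_le_add (hC₁ x) (hC₂ x))⟩

lemma IsAFormBounded.sub {T₁ T₂ : E →L[ℂ] E} (h₁ : IsAFormBounded A T₁)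
    (h₂ : IsAFormBounded A T₂) : IsAFormBounded A (T₁ - T₂) := by
  obtain ⟨C₁, hC₁⟩ := h₁
  obtain ⟨C₂, hC₂⟩ := h₂
  exact ⟨C₁ + C₂, fun x => (norm_inner_sub_apply_le T₁ T₂ x).trans
    (by rw [add_mul]; exact add_le_add (hC₁ x) (hC₂ x))⟩

lemma wA_nonneg (A T : E →L[ℂ] E) : 0 ≤ wA A T :=
  Real.sSup_nonneg fun _ ⟨_, _, hr⟩ => hr ▸ norm_nonneg _

lemma wA_le {T : E →L[ℂ] E} {c : ℝ} (hc : 0 ≤ c)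
    (h : ∀ x, ‖⟪A (T x), x⟫_ℂ‖ ≤ c * (⟪A x, x⟫_ℂ).re) : wA A T ≤ c := by
  refine Real.sSup_le ?_ hc
  rintro _ ⟨x, hx, rfl⟩
  simpa [Real.sqrt_eq_one.1 hx] using h x

lemma norm_inner_le_wA_mul (hA : A.IsPositive) {T : E →L[ℂ] E} (hT : IsAFormBounded A T)
    (x : E) : ‖⟪A (T x), x⟫_ℂ‖ ≤ wA A T * (⟪A x, x⟫_ℂ).re := by
  obtain ⟨C, hC⟩ := hT
  have hbdd : BddAbove {r : ℝ | ∃ x : E, aNorm A x = 1 ∧ r = ‖⟪A (T x), x⟫_ℂ‖} := by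
    refine ⟨C, ?_⟩
    rintro _ ⟨y, hy, rfl⟩
    simpa [Real.sqrt_eq_one.1 hy] using hC y
  rw [← aNorm_sq hA]
  rcases (aNorm_nonneg (A := A) x).eq_or_lt with hx | hx
  · simpa [← hx] using norm_inner_le_aNorm_mul_aNorm hA (T x) x
  set c : ℂ := (((aNorm A x)⁻¹ : ℝ) : ℂ)
  have hc : ‖c‖ = (aNorm A x)⁻¹ := by simp [c, hx.le]
  have hcx : aNorm A (c • x) = 1 := by rw [aNorm_smul, hc, inv_mul_cancel₀ hx.ne']
  have hsup : ‖⟪A (T (c • x)), c • x⟫_ℂ‖ ≤ wA A T := le_csSup hbdd ⟨_, hcx, rfl⟩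
  have hscale : ⟪A (T (c • x)), c • x⟫_ℂ = (‖c‖ ^ 2 : ℂ) * ⟪A (T x), x⟫_ℂ :=
    inner_map_smul_smul (A ∘L T) c x
  rw [hscale, norm_mul, ← Complex.ofReal_pow, Complex.norm_real,
    Real.norm_of_nonneg (sq_nonneg _), hc, inv_pow, inv_mul_le_iff₀ (by positivity)] at hsup
  linarith

lemma inner_I_smul_I_smul (x : E) :
    ⟪A (Complex.I • x), Complex.I • x⟫_ℂ = ⟪A x, x⟫_ℂ := by
  rw [inner_map_smul_smul, Complex.norm_I]
  simp

lemma norm_inner_add_inner_le (hA : A.IsPositive) {T : E →L[ℂ] E} (hT : IsAFormBounded A T)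
    (x y : E) : ‖⟪A (T y), x⟫_ℂ + ⟪A (T x), y⟫_ℂ‖ ≤
      wA A T * ((⟪A x, x⟫_ℂ).re + (⟪A y, y⟫_ℂ).re) := by
  have hpolar : 2 * (⟪A (T y), x⟫_ℂ + ⟪A (T x), y⟫_ℂ) =
      ⟪A (T (x + y)), x + y⟫_ℂ - ⟪A (T (x - y)), x - y⟫_ℂ := by
    simp only [map_add, map_sub, inner_add_left, inner_add_right, inner_sub_left, inner_sub_right]
    ring
  have h := norm_sub_le (⟪A (T (x + y)), x + y⟫_ℂ) (⟪A (T (x - y)), x - y⟫_ℂ)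
  rw [← hpolar, norm_mul, Complex.norm_two] at h
  calc _ ≤ (‖⟪A (T (x + y)), x + y⟫_ℂ‖ + ‖⟪A (T (x - y)), x - y⟫_ℂ‖) / 2 := by linarith
    _ ≤ (wA A T * (⟪A (x + y), x + y⟫_ℂ).re + wA A T * (⟪A (x - y), x - y⟫_ℂ).re) / 2 := by
        gcongr <;> exact norm_inner_le_wA_mul hA hT _
    _ = wA A T * ((⟪A x, x⟫_ℂ).re + (⟪A y, y⟫_ℂ).re) := by
        rw [← mul_add, re_inner_add_add_add_re_inner_sub_sub]
        ring

lemma norm_inner_le_wA_mul_add (hA : A.IsPositive) {T : E →L[ℂ] E} (hT : IsAFormBounded A T)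
    (x y : E) : ‖⟪A (T x), y⟫_ℂ‖ ≤ wA A T * ((⟪A x, x⟫_ℂ).re + (⟪A y, y⟫_ℂ).re) := by
  have hpolar : 2 * Complex.I * ⟪A (T x), y⟫_ℂ =
      Complex.I * (⟪A (T y), x⟫_ℂ + ⟪A (T x), y⟫_ℂ) -
        (⟪A (T y), Complex.I • x⟫_ℂ + ⟪A (T (Complex.I • x)), y⟫_ℂ) := by
    simp only [map_smul, inner_smul_left, inner_smul_right, Complex.conj_I]
    ring
  have h := norm_sub_le (Complex.I * (⟪A (T y), x⟫_ℂ + ⟪A (T x), y⟫_ℂ))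
    (⟪A (T y), Complex.I • x⟫_ℂ + ⟪A (T (Complex.I • x)), y⟫_ℂ)
  rw [← hpolar, norm_mul, norm_mul, norm_mul, Complex.norm_two, Complex.norm_I] at h
  have h₁ := norm_inner_add_inner_le hA hT x y
  have h₂ := norm_inner_add_inner_le hA hT (Complex.I • x) y
  rw [inner_I_smul_I_smul] at h₂
  linarith

lemma aOpNorm_le_two_mul_wA (hA : A.IsPositive) {T : E →L[ℂ] E} (hT : IsAFormBounded A T) :
    aOpNorm A T ≤ 2 * wA A T := by
  refine Real.sSup_le ?_ (by linarith [wA_nonneg A T])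
  rintro _ ⟨x, -, hx, rfl⟩
  rcases (aNorm_nonneg (A := A) (T x)).eq_or_lt with hTx | hTx
  · rw [← hTx]; linarith [wA_nonneg A T]
  set c : ℂ := (((aNorm A (T x))⁻¹ : ℝ) : ℂ)
  have hc : ‖c‖ = (aNorm A (T x))⁻¹ := by simp [c, hTx.le]
  have hcTx : (⟪A (c • T x), c • T x⟫_ℂ).re = 1 := by
    rw [← aNorm_sq hA, aNorm_smul, hc, inv_mul_cancel₀ hTx.ne', one_pow]
  have h := norm_inner_le_wA_mul_add hA hT x (c • T x)
  rw [hcTx, Real.sqrt_eq_one.1 hx, inner_smul_right, norm_mul, hc,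
    norm_inner_self_eq_aNorm_sq hA, sq, ← mul_assoc, inv_mul_cancel₀ hTx.ne', one_mul] at h
  linarith

lemma wA_add_le (hA : A.IsPositive) {T₁ T₂ : E →L[ℂ] E} (h₁ : IsAFormBounded A T₁)
    (h₂ : IsAFormBounded A T₂) : wA A (T₁ + T₂) ≤ wA A T₁ + wA A T₂ :=
  wA_le (add_nonneg (wA_nonneg A T₁) (wA_nonneg A T₂)) fun x =>
    (norm_inner_add_apply_le T₁ T₂ x).trans <| by
      rw [add_mul]; exact add_le_add (norm_inner_le_wA_mul hA h₁ x) (norm_inner_le_wA_mul hA h₂ x)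

lemma wA_sub_le (hA : A.IsPositive) {T₁ T₂ : E →L[ℂ] E} (h₁ : IsAFormBounded A T₁)
    (h₂ : IsAFormBounded A T₂) : wA A (T₁ - T₂) ≤ wA A T₁ + wA A T₂ :=
  wA_le (add_nonneg (wA_nonneg A T₁) (wA_nonneg A T₂)) fun x =>
    (norm_inner_sub_apply_le T₁ T₂ x).trans <| by
      rw [add_mul]; exact add_le_add (norm_inner_le_wA_mul hA h₁ x) (norm_inner_le_wA_mul hA h₂ x)

lemma wB_antidiagonal_le (hA : A.IsPositive) {T₁ T₂ : E →L[ℂ] E}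
    (hP : IsAFormBounded A (T₁ + T₂)) (hQ : IsAFormBounded A (T₁ - T₂)) :
    wB A 0 T₁ T₂ 0 ≤ (wA A (T₁ + T₂) + wA A (T₁ - T₂)) / 2 := by
  refine Real.sSup_le ?_ (by linarith [wA_nonneg A (T₁ + T₂), wA_nonneg A (T₁ - T₂)])
  rintro _ ⟨x, y, hxy, rfl⟩
  rw [Real.sqrt_eq_one] at hxy
  -- `T₁ = (P + Q) / 2`, `T₂ = (P - Q) / 2`; the `Q`-part is symmetrized by `y ↦ I • y`
  have hsplit : ⟪A ((0 : E →L[ℂ] E) x + T₁ y), x⟫_ℂ + ⟪A (T₂ x + (0 : E →L[ℂ] E) y), y⟫_ℂ =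
      (⟪A ((T₁ + T₂) y), x⟫_ℂ + ⟪A ((T₁ + T₂) x), y⟫_ℂ) / 2 +
        Complex.I / 2 *
          (⟪A ((T₁ - T₂) (Complex.I • y)), x⟫_ℂ + ⟪A ((T₁ - T₂) x), Complex.I • y⟫_ℂ) := by
    simp only [zero_apply, zero_add, add_zero, add_apply, sub_apply, map_add, map_sub, map_smul,
      inner_add_left, inner_sub_left, inner_smul_left, inner_smul_right, Complex.conj_I]
    ring_nf
    simp only [Complex.I_sq]
    ring
  have hP' := norm_inner_add_inner_le hA hP x y
  have hQ' := norm_inner_add_inner_le hA hQ x (Complex.I • y)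
  rw [inner_I_smul_I_smul, hxy, mul_one] at hQ'
  rw [hxy, mul_one] at hP'
  rw [hsplit]
  refine (norm_add_le _ _).trans ?_
  rw [norm_div, norm_mul, norm_div, Complex.norm_I, Complex.norm_two]
  linarith

end

theorem stmt19_general (A T1 T2 : H →L[ℂ] H) (hA : A.IsPositive)
    (h1 : ∃ S : H →L[ℂ] H, A ∘L S = (ContinuousLinearMap.adjoint T1) ∘L A)
    (h2 : ∃ S : H →L[ℂ] H, A ∘L S = (ContinuousLinearMap.adjoint T2) ∘L A) :
    wB A 0 T1 T2 0 + (aOpNorm A T1 + aOpNorm A T2) / 2 +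
        (1 / 2) * |wA A (T1 + T2) - (aOpNorm A T1 + aOpNorm A T2) / 2| +
        (1 / 2) * |wA A (T1 - T2) - (aOpNorm A T1 + aOpNorm A T2) / 2| ≤
      2 * (wA A T1 + wA A T2) := by
  obtain ⟨S1, hS1⟩ := h1
  obtain ⟨S2, hS2⟩ := h2
  have hT1 : IsAFormBounded A T1 :=
    .of_aNorm_apply_le hA (aNorm_apply_le_of_comp_eq_adjoint_comp hA hS1)
  have hT2 : IsAFormBounded A T2 :=
    .of_aNorm_apply_le hA (aNorm_apply_le_of_comp_eq_adjoint_comp hA hS2)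
  have hB := wB_antidiagonal_le hA (hT1.add hT2) (hT1.sub hT2)
  have hP := wA_add_le hA hT1 hT2
  have hQ := wA_sub_le hA hT1 hT2
  have hN : (aOpNorm A T1 + aOpNorm A T2) / 2 ≤ wA A T1 + wA A T2 := by
    linarith [aOpNorm_le_two_mul_wA hA hT1, aOpNorm_le_two_mul_wA hA hT2]
  set N := (aOpNorm A T1 + aOpNorm A T2) / 2
  have hPN : |wA A (T1 + T2) - N| ≤ 2 * (wA A T1 + wA A T2) - wA A (T1 + T2) - N :=
    abs_sub_le_iff.2 ⟨by linarith, by linarith⟩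
  have hQN : |wA A (T1 - T2) - N| ≤ 2 * (wA A T1 + wA A T2) - wA A (T1 - T2) - N :=
    abs_sub_le_iff.2 ⟨by linarith, by linarith⟩
  linarith

theorem stmt19 (A T1 T2 : H →L[ℂ] H) (hA : A.IsPositive) (hA' : ∀ x : H, x ≠ 0 → 0 < (⟪A x, x⟫_ℂ).re)
    (h1 : ∃ S : H →L[ℂ] H, A ∘L S = (ContinuousLinearMap.adjoint T1) ∘L A)
    (h2 : ∃ S : H →L[ℂ] H, A ∘L S = (ContinuousLinearMap.adjoint T2) ∘L A) :
    wB A 0 T1 T2 0 + (aOpNorm A T1 + aOpNorm A T2) / 2 +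
        (1 / 2) * |wA A (T1 + T2) - (aOpNorm A T1 + aOpNorm A T2) / 2| +
        (1 / 2) * |wA A (T1 - T2) - (aOpNorm A T1 + aOpNorm A T2) / 2| ≤
      2 * (wA A T1 + wA A T2) :=
  stmt19_general A T1 T2 hA h1 h2
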